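/- arXiv:1910.11733 — 2 statements merged into one kernel-verified Lean document; each statement's English description precedes it below -/
import Mathlib

section
/- Let Γ be an infinite graph and F a finite optimal subset of its vertices (i.e. |∂F|/|F| = Λ(|F|), where Λ is the isoperimetric profile). Then twice the Cheeger constant of the subgraph induced on F is at least Λ(|F|/2) − Λ(|F|), i.e. 2·h(F) ≥ Λ(⌊|F|/2⌋) − Λ(|F|). -/
open Set Filter

namespace SepProfile

variable {V : Type*}

/-- Edge boundary of a vertex set: pairs (a,b) with a ∈ A, b ∉ A, a ~ b. -/
def ebd (G : SimpleGraph V) (A : Set V) : Set (V × V) :=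
  {p | G.Adj p.1 p.2 ∧ p.1 ∈ A ∧ p.2 ∉ A}

/-- Isoperimetric ratio |∂A|/|A|. -/
noncomputable def ratio (G : SimpleGraph V) (A : Set V) : ℝ :=
  ((ebd G A).ncard : ℝ) / (A.ncard : ℝ)

/-- Isoperimetric profile Λ(n). -/
noncomputable def isop (G : SimpleGraph V) (n : ℕ) : ℝ :=
  sInf {x | ∃ A : Set V, A.Finite ∧ A.Nonempty ∧ A.ncard ≤ n ∧ x = ratio G A}

/-- Boundary of A within F (edges of the induced subgraph on F leaving A). -/
def inbd (G : SimpleGraph V) (F A : Set V) : Set (V × V) :=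
  {p | G.Adj p.1 p.2 ∧ p.1 ∈ A ∧ p.2 ∈ F \ A}

/-- Cheeger constant of the subgraph induced on F. -/
noncomputable def cheeger (G : SimpleGraph V) (F : Set V) : ℝ :=
  sInf {x | ∃ A : Set V, A ⊆ F ∧ A.Nonempty ∧ 2 * A.ncard ≤ F.ncard ∧
    x = ((inbd G F A).ncard : ℝ) / (A.ncard : ℝ)}

/-- Separation profile Sep(n) = sup_{|F| ≤ n} |F|·h(F). -/
noncomputable def sep (G : SimpleGraph V) (n : ℕ) : ℝ :=
  sSup {x | ∃ F : Set V, F.Finite ∧ F.ncard ≤ n ∧ x = (F.ncard : ℝ) * cheeger G F}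

/-- A finite set is optimal if it realizes the isoperimetric profile. -/
def Optimal (G : SimpleGraph V) (F : Set V) : Prop :=
  F.Finite ∧ F.Nonempty ∧ ratio G F = isop G F.ncard

/-- An integer is optimal if some optimal set has that cardinality. -/
def OptimalInt (G : SimpleGraph V) (n : ℕ) : Prop :=
  ∃ F : Set V, Optimal G F ∧ F.ncard = n

/-- Ball of radius n around v for the graph metric. -/
def ball (G : SimpleGraph V) (v : V) (n : ℕ) : Set V :=
  {u | G.Reachable v u ∧ G.dist v u ≤ n}

/-- All degrees bounded by D. -/
def DegLE (G : SimpleGraph V) (D : ℕ) : Prop :=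
  ∀ v, (G.neighborSet v).ncard ≤ D

/-- Amenability: the isoperimetric profile tends to 0. -/
def Amenable (G : SimpleGraph V) : Prop :=
  Tendsto (fun n => isop G n) atTop (nhds 0)

/-- F together with its outer vertex neighbourhood. -/
def nbh (G : SimpleGraph V) (F : Set V) : Set V :=
  F ∪ {b | ∃ a ∈ F, G.Adj a b}

/-- Partial self-isomorphisms: every finite F has a disjoint isomorphic copy
(together with its boundary neighbourhood). -/
def HasPSI (G : SimpleGraph V) : Prop :=
  ∀ F : Set V, F.Finite →
    ∃ F' : Set V, F'.Finite ∧ Disjoint F F' ∧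
      ∃ e : G.induce (nbh G F) ≃g G.induce (nbh G F'),
        ∀ x : nbh G F, (x : V) ∈ F ↔ ((e x : V) ∈ F')

/-- δ-geometric decay function p_f^δ(x) = inf {y > 0 : f(y) ≤ δ·f(x)}. -/
noncomputable def gdecay (f : ℝ → ℝ) (δ x : ℝ) : ℝ :=
  sInf {y | 0 < y ∧ f y ≤ δ * f x}

end SepProfile

open SepProfile Real

/-!
For `A ⊆ F`, each edge of the induced subgraph between `A` and `F \ A` lies in both `∂A` and
`∂(F \ A)`, and the remaining edges of these two boundaries form `∂F`; hence
`|∂A| + |∂(F \ A)| = |∂F| + 2|∂_F A|`. If `F` is optimal and `2|A| ≤ |F|`, then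
`|∂A| ≥ Λ(|F|/2)|A|`, `|∂(F \ A)| ≥ Λ(|F|)|F \ A|` and `|∂F| = Λ(|F|)|F|`, which leaves
`(Λ(|F|/2) - Λ(|F|))|A| ≤ 2|∂_F A|`.

When `∂F` is infinite some vertex of `F` has infinite degree; `ncard` counts its boundary as `0`,
so `Λ` vanishes identically.
-/

namespace SepProfile

variable {V : Type*} (G : SimpleGraph V)

lemma ratio_nonneg (A : Set V) : 0 ≤ ratio G A := by
  unfold ratio
  positivity

lemma isop_nonneg (n : ℕ) : 0 ≤ isop G n :=
  Real.sInf_nonneg <| by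
    rintro x ⟨A, -, -, -, rfl⟩
    exact ratio_nonneg G A

lemma cheeger_nonneg (F : Set V) : 0 ≤ cheeger G F :=
  Real.sInf_nonneg <| by
    rintro x ⟨A, -, -, -, rfl⟩
    positivity

lemma isop_zero : isop G 0 = 0 := by
  unfold isop
  convert Real.sInf_empty
  refine eq_empty_of_forall_notMem ?_
  rintro x ⟨A, hA, hAne, hAcard, -⟩
  exact (Nat.pos_iff_ne_zero.1 ((ncard_pos hA).2 hAne)) (Nat.le_zero.1 hAcard)

variable {G}

lemma isop_le_ratio {A : Set V} {n : ℕ} (hA : A.Finite) (hAne : A.Nonempty)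
    (hcard : A.ncard ≤ n) : isop G n ≤ ratio G A :=
  csInf_le ⟨0, by rintro x ⟨B, -, -, -, rfl⟩; exact ratio_nonneg G B⟩ ⟨A, hA, hAne, hcard, rfl⟩

lemma isop_mul_ncard_le {A : Set V} {n : ℕ} (hA : A.Finite) (hAne : A.Nonempty)
    (hcard : A.ncard ≤ n) : isop G n * A.ncard ≤ (ebd G A).ncard := by
  have hpos : (0 : ℝ) < A.ncard := by exact_mod_cast (ncard_pos hA).2 hAne
  rw [← le_div_iff₀ hpos]
  exact isop_le_ratio hA hAne hcard

lemma isop_eq_zero_of_ebd_infinite {F : Set V} (hF : F.Finite) (hbd : (ebd G F).Infinite)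
    (n : ℕ) : isop G n = 0 := by
  obtain ⟨a, -, ha⟩ : ∃ a ∈ F, (ebd G {a}).Infinite := by
    by_contra! h
    refine hbd ((hF.biUnion h).subset ?_)
    rintro ⟨a, b⟩ ⟨hab, ha, hb⟩
    exact mem_biUnion ha ⟨hab, rfl, fun hba => hb (hba ▸ ha)⟩
  rcases Nat.eq_zero_or_pos n with rfl | hn
  · exact isop_zero G
  refine le_antisymm ?_ (isop_nonneg G n)
  calc isop G n ≤ ratio G {a} := isop_le_ratio (finite_singleton a) (singleton_nonempty a)
          (by rwa [ncard_singleton])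
    _ = 0 := by rw [ratio, ha.ncard, Nat.cast_zero, zero_div]

lemma encard_ebd_add_encard_ebd_sdiff {F A : Set V} (hA : A ⊆ F) :
    (ebd G A).encard + (ebd G (F \ A)).encard = (ebd G F).encard + 2 * (inbd G F A).encard := by
  set outbd : Set V → Set (V × V) := fun B => {p | G.Adj p.1 p.2 ∧ p.1 ∈ B ∧ p.2 ∉ F}
  have ebd_eq {B : Set V} (hB : B ⊆ F) : ebd G B = inbd G F B ∪ outbd B := by
    ext ⟨a, b⟩
    have : b ∈ B → b ∈ F := fun h => hB h
    simp only [ebd, inbd, outbd, Set.mem_ofPred_eq, mem_union, Set.mem_sdiff]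
    tauto
  have inbd_disjoint_outbd (B : Set V) : Disjoint (inbd G F B) (outbd B) :=
    disjoint_left.2 fun _ hin hout => hout.2.2 hin.2.2.1
  have ebd_F : ebd G F = outbd A ∪ outbd (F \ A) := by
    ext ⟨a, b⟩
    have : a ∈ A → a ∈ F := fun h => hA h
    simp only [ebd, outbd, Set.mem_ofPred_eq, mem_union, Set.mem_sdiff]
    tauto
  have out_disjoint : Disjoint (outbd A) (outbd (F \ A)) :=
    disjoint_left.2 fun _ hA' hB' => hB'.2.1.2 hA'.2.1
  have inbd_sdiff : inbd G F (F \ A) = Prod.swap '' inbd G F A := by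
    rw [image_swap_eq_preimage_swap]
    ext ⟨a, b⟩
    have : b ∈ A → b ∈ F := fun h => hA h
    simp only [inbd, Set.mem_ofPred_eq, mem_preimage, Prod.swap_prod_mk, Set.mem_sdiff,
      G.adj_comm b a]
    tauto
  rw [ebd_eq hA, ebd_eq sdiff_subset, ebd_F, encard_union_eq (inbd_disjoint_outbd _),
    encard_union_eq (inbd_disjoint_outbd _), encard_union_eq out_disjoint, inbd_sdiff,
    Prod.swap_injective.encard_image]
  ring

lemma ncard_ebd_add_ncard_ebd_sdiff {F A : Set V} (hF : F.Finite) (hbd : (ebd G F).Finite)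
    (hA : A ⊆ F) :
    (ebd G A).ncard + (ebd G (F \ A)).ncard = (ebd G F).ncard + 2 * (inbd G F A).ncard := by
  have hin : (inbd G F A).Finite := (hF.prod hF).subset fun p hp => ⟨hA hp.2.1, hp.2.2.1⟩
  have h := encard_ebd_add_encard_ebd_sdiff (G := G) hA
  obtain ⟨hA', hB'⟩ := WithTop.add_ne_top.1 <| h ▸ WithTop.add_ne_top.2
    ⟨hbd.encard_lt_top.ne, WithTop.mul_ne_top (by decide) hin.encard_lt_top.ne⟩
  apply Nat.cast_injective (R := ℕ∞)
  push_cast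
  rwa [(encard_ne_top_iff.1 hA').cast_ncard_eq, (encard_ne_top_iff.1 hB').cast_ncard_eq,
    hbd.cast_ncard_eq, hin.cast_ncard_eq]

lemma isop_half_sub_isop_mul_ncard_le {F A : Set V} (hF : Optimal G F) (hbd : (ebd G F).Finite)
    (hA : A ⊆ F) (hAne : A.Nonempty) (hAcard : 2 * A.ncard ≤ F.ncard) :
    (isop G (F.ncard / 2) - isop G F.ncard) * A.ncard ≤ 2 * (inbd G F A).ncard := by
  obtain ⟨hFfin, hFne, hopt⟩ := hF
  have hsplit := ncard_sdiff_add_ncard_of_subset hA hFfin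
  have hApos := (ncard_pos (hFfin.subset hA)).2 hAne
  have hA_bd : isop G (F.ncard / 2) * A.ncard ≤ (ebd G A).ncard :=
    isop_mul_ncard_le (hFfin.subset hA) hAne (by omega)
  have hB_bd : isop G F.ncard * (F \ A).ncard ≤ (ebd G (F \ A)).ncard :=
    isop_mul_ncard_le hFfin.sdiff (nonempty_of_ncard_ne_zero (by omega))
      (ncard_le_ncard sdiff_subset hFfin)
  have hF_bd : ((ebd G F).ncard : ℝ) = isop G F.ncard * F.ncard := by
    rw [← hopt, ratio, div_mul_cancel₀]
    exact_mod_cast ((ncard_pos hFfin).2 hFne).ne'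
  have hid : ((ebd G A).ncard : ℝ) + (ebd G (F \ A)).ncard
      = (ebd G F).ncard + 2 * (inbd G F A).ncard := by
    exact_mod_cast ncard_ebd_add_ncard_ebd_sdiff hFfin hbd hA
  rw [← Nat.cast_inj.2 hsplit, Nat.cast_add, mul_add] at hF_bd
  linarith

lemma le_cheeger {F : Set V} {c : ℝ} (hF : 2 ≤ F.ncard)
    (h : ∀ A ⊆ F, A.Nonempty → 2 * A.ncard ≤ F.ncard → c * A.ncard ≤ (inbd G F A).ncard) :
    c ≤ cheeger G F := by
  have hFfin : F.Finite := finite_of_ncard_ne_zero (by omega)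
  obtain ⟨a, ha⟩ := nonempty_of_ncard_ne_zero (s := F) (by omega)
  refine le_csInf ⟨_, {a}, singleton_subset_iff.2 ha, singleton_nonempty a,
    by rwa [ncard_singleton], rfl⟩ ?_
  rintro x ⟨A, hA, hAne, hAcard, rfl⟩
  rw [le_div_iff₀ (by exact_mod_cast (ncard_pos (hFfin.subset hA)).2 hAne)]
  exact h A hA hAne hAcard

end SepProfile

theorem stmt0_general {V : Type*} (G : SimpleGraph V) (F : Set V)
    (hF : Optimal G F) :
    isop G (F.ncard / 2) - isop G F.ncard ≤ 2 * cheeger G F := by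
  have := cheeger_nonneg G F
  have := isop_nonneg G F.ncard
  rcases (ebd G F).finite_or_infinite with hbd | hbd
  · rcases Nat.lt_or_ge F.ncard 2 with hF2 | hF2
    · rw [show F.ncard / 2 = 0 by omega, isop_zero]
      linarith
    · have := le_cheeger (G := G) (c := (isop G (F.ncard / 2) - isop G F.ncard) / 2) hF2
        fun A hA hAne hAcard => by
          linarith [isop_half_sub_isop_mul_ncard_le hF hbd hA hAne hAcard]
      linarith
  · rw [isop_eq_zero_of_ebd_infinite hF.1 hbd]
    linarith

/-- for an optimal finite set F in an infinite graph,
2·h(F) ≥ Λ(⌊|F|/2⌋) − Λ(|F|). -/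
theorem stmt0 {V : Type*} [Infinite V] (G : SimpleGraph V) (F : Set V)
    (hF : Optimal G F) :
    isop G (F.ncard / 2) - isop G F.ncard ≤ 2 * cheeger G F :=
  stmt0_general G F hF
end

section
/- Let G be a connected infinite graph of bounded degree D, let v be a vertex, and suppose there are d₁ > 1, g > 0 and an integer n_ω such that every finite vertex set A (in particular every ball B(v,r) with r ≥ n_ω) satisfies |∂A| ≥ g·|A|^{1−1/d₁}. Then there is a constant b' > 0 (depending only on d₁ and D) such that for every n ≥ n_ω, |B(v,n)| ≥ b'·g^{d₁}·(n − n_ω)^{d₁}. -/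
open Set Filter

/-! The isoperimetric inequality applied to the ball `B(n)`, together with the degree bound
(each new vertex receives at most `D` boundary edges), gives the discrete growth law
`|B(n+1)| ≥ |B(n)| + (g/D) |B(n)|^(1-1/d)`. By convexity of `x ↦ x ^ d`, this forces
`|B(n)|^(1/d)` to grow by at least `ε = (1 + g/D)^(1/d) - 1` per step, so
`|B(nω + k)| ≥ (1 + ε k)^d ≥ (ε/g)^d g^d k^d`. -/

theorem Real.add_rpow_le_rpow_add_mul_rpow_sub_one {d ε t : ℝ} (hd : 1 ≤ d) (hε : 0 ≤ ε)
    (ht : 1 ≤ t) : (t + ε) ^ d ≤ t ^ d + ((1 + ε) ^ d - 1) * t ^ (d - 1) := by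
  have ht0 : 0 < t := by linarith
  have hx0 : 0 ≤ t⁻¹ := inv_nonneg.2 ht0.le
  have hx1 : t⁻¹ ≤ 1 := inv_le_one_of_one_le₀ ht
  -- convexity of `x ↦ x ^ d` on the segment `[1, 1 + ε]`, at the point `1 + ε / t`
  have hconv : (1 + ε * t⁻¹) ^ d ≤ 1 + ((1 + ε) ^ d - 1) * t⁻¹ := by
    have := (convexOn_rpow hd).2 (mem_Ici.2 zero_le_one)
      (mem_Ici.2 (by linarith : (0 : ℝ) ≤ 1 + ε)) (sub_nonneg.2 hx1) hx0 (sub_add_cancel 1 t⁻¹)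
    simp only [smul_eq_mul, one_rpow, mul_one] at this
    rw [show 1 - t⁻¹ + t⁻¹ * (1 + ε) = 1 + ε * t⁻¹ by ring] at this
    linarith
  calc (t + ε) ^ d = t ^ d * (1 + ε * t⁻¹) ^ d := by
        rw [← mul_rpow ht0.le (by positivity), mul_add, mul_one, mul_left_comm,
          mul_inv_cancel₀ ht0.ne', mul_one]
    _ ≤ t ^ d * (1 + ((1 + ε) ^ d - 1) * t⁻¹) := by gcongr
    _ = t ^ d + ((1 + ε) ^ d - 1) * t ^ (d - 1) := by
        rw [rpow_sub_one ht0.ne', div_eq_mul_inv]; ring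

theorem Real.one_add_mul_rpow_le_of_growth {a : ℕ → ℝ} {c d : ℝ} (hd : 1 ≤ d) (hc : 0 ≤ c)
    (h0 : 1 ≤ a 0) (hstep : ∀ n, a n + c * a n ^ (1 - 1 / d) ≤ a (n + 1)) (k : ℕ) :
    (1 + ((1 + c) ^ (1 / d) - 1) * k) ^ d ≤ a k := by
  have hd0 : d ≠ 0 := by positivity
  set ε := (1 + c) ^ (1 / d) - 1
  have hε : 0 ≤ ε := sub_nonneg.2 (one_le_rpow (by linarith) (by positivity))
  have hεd : (1 + ε) ^ d = 1 + c := by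
    rw [add_sub_cancel, one_div, rpow_inv_rpow (by linarith) hd0]
  induction k with
  | zero => simpa using h0
  | succ k ih =>
    have hbase : 1 ≤ 1 + ε * k := le_add_of_nonneg_right (by positivity)
    have hak : 1 ≤ a k := (one_le_rpow hbase (by linarith)).trans ih
    obtain ⟨t, ht⟩ : ∃ t, t = a k ^ (1 / d) := ⟨_, rfl⟩
    have htd : t ^ d = a k := by rw [ht, one_div, rpow_inv_rpow (by linarith) hd0]
    have htd' : t ^ (d - 1) = a k ^ (1 - 1 / d) := by
      rw [ht, ← rpow_mul (by linarith)]; congr 1; field_simp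
    have hkt : 1 + ε * k ≤ t := by
      calc 1 + ε * k = ((1 + ε * k) ^ d) ^ (1 / d) := by
            rw [one_div, rpow_rpow_inv (by linarith) hd0]
        _ ≤ t := by rw [ht]; gcongr
    calc (1 + ε * (k + 1 : ℕ)) ^ d = (1 + ε * k + ε) ^ d := by push_cast; ring_nf
      _ ≤ (t + ε) ^ d := by gcongr
      _ ≤ t ^ d + ((1 + ε) ^ d - 1) * t ^ (d - 1) :=
          add_rpow_le_rpow_add_mul_rpow_sub_one hd hε (hbase.trans hkt)
      _ = a k + c * a k ^ (1 - 1 / d) := by rw [hεd, htd, htd', add_sub_cancel_left]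
      _ ≤ a (k + 1) := hstep k

theorem Set.ncard_le_mul_ncard_image {α β : Type*} {f : α → β} {s : Set α} (hs : s.Finite)
    (n : ℕ) (hn : ∀ b ∈ f '' s, (s ∩ f ⁻¹' {b}).ncard ≤ n) : s.ncard ≤ n * (f '' s).ncard := by
  classical
  rw [← hs.coe_toFinset, ← Finset.coe_image, Set.ncard_coe_finset, Set.ncard_coe_finset]
  refine Finset.card_le_mul_card_image _ n fun b hb => ?_
  rw [← Set.ncard_coe_finset, Finset.coe_filter]
  convert hn b (by simpa using hb) using 2
  ext a; simp

namespace SepProfile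

variable {V : Type*} {G : SimpleGraph V}

theorem disjoint_image_snd_ebd (A : Set V) : Disjoint A (Prod.snd '' ebd G A) := by
  rw [Set.disjoint_right]
  rintro _ ⟨p, ⟨-, -, hp⟩, rfl⟩
  exact hp

theorem neighborSet_eq_image_snd_ebd_singleton (b : V) :
    G.neighborSet b = Prod.snd '' ebd G {b} := by
  ext a
  constructor
  · intro h
    exact ⟨(b, a), ⟨h, rfl, fun ha => G.loopless.irrefl b (ha ▸ h)⟩, rfl⟩
  · rintro ⟨p, ⟨h, rfl, -⟩, rfl⟩
    exact h

theorem ncard_ebd_le_mul {D : ℕ} (hdeg : DegLE G D) (hnbr : ∀ b, (G.neighborSet b).Finite)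
    {A : Set V} (hA : (ebd G A).Finite) :
    (ebd G A).ncard ≤ D * (Prod.snd '' ebd G A).ncard := by
  refine Set.ncard_le_mul_ncard_image hA D fun b _ => (hdeg b).trans' ?_
  refine Set.ncard_le_ncard_of_injOn Prod.fst (fun p hp => ?_) ?_ (hnbr b)
  · obtain ⟨⟨hadj, -, -⟩, rfl⟩ := hp
    exact hadj.symm
  · exact fun p hp q hq h => Prod.ext h (hp.2.trans hq.2.symm)

theorem mem_ball_self (v : V) (n : ℕ) : v ∈ ball G v n :=
  ⟨.refl v, by simp⟩

theorem ball_zero (v : V) : ball G v 0 = {v} := by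
  ext u
  simp only [ball, Set.mem_ofPred_eq, Nat.le_zero, Set.mem_singleton_iff]
  constructor
  · rintro ⟨hr, hd⟩
    exact (hr.dist_eq_zero_iff.mp hd).symm
  · rintro rfl
    exact ⟨.refl _, SimpleGraph.dist_self⟩

theorem ball_succ (v : V) (n : ℕ) :
    ball G v (n + 1) = ball G v n ∪ Prod.snd '' ebd G (ball G v n) := by
  apply subset_antisymm
  · rintro u ⟨hr, hd⟩
    by_cases h : G.dist v u ≤ n
    · exact Or.inl ⟨hr, h⟩
    right
    -- the vertex preceding `u` on a shortest walk from `v` lies in `ball G v n`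
    obtain ⟨p, hp⟩ := hr.exists_walk_length_eq_dist
    have hvu : u ≠ v := by rintro rfl; simp at h
    obtain ⟨w, hadj, q, hq⟩ := SimpleGraph.Walk.exists_eq_cons_of_ne hvu p.reverse
    have hlen : q.length + 1 = p.length := by
      simpa [SimpleGraph.Walk.length_reverse] using (congrArg SimpleGraph.Walk.length hq).symm
    have hw : w ∈ ball G v n :=
      ⟨⟨q.reverse⟩, (SimpleGraph.dist_le q.reverse).trans (by simp; omega)⟩
    exact ⟨(w, u), ⟨hadj.symm, hw, fun hu => h hu.2⟩, rfl⟩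
  · refine Set.union_subset (fun u hu => ⟨hu.1, hu.2.trans n.le_succ⟩) ?_
    rintro _ ⟨⟨a, b⟩, ⟨hadj, ⟨hra, hda⟩, -⟩, rfl⟩
    refine ⟨hra.trans hadj.reachable, ?_⟩
    calc G.dist v b ≤ G.dist v a + G.dist a b := hadj.reachable.dist_triangle_right v
      _ ≤ n + 1 := add_le_add hda (SimpleGraph.dist_eq_one_iff_adj.mpr hadj).le

theorem ball_finite (hebd : ∀ A : Set V, A.Finite → A.Nonempty → (ebd G A).Finite) (v : V) :
    ∀ n, (ball G v n).Finite
  | 0 => by rw [ball_zero]; exact Set.finite_singleton v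
  | n + 1 => by
    rw [ball_succ]
    exact (ball_finite hebd v n).union
      ((hebd _ (ball_finite hebd v n) ⟨v, mem_ball_self v n⟩).image _)

def IsoperimetricIneq (G : SimpleGraph V) (d g : ℝ) : Prop :=
  ∀ A : Set V, A.Finite → A.Nonempty → g * (A.ncard : ℝ) ^ (1 - 1 / d) ≤ (ebd G A).ncard

namespace IsoperimetricIneq

variable {d g : ℝ}

theorem ncard_ebd_pos (hiso : IsoperimetricIneq G d g) (hg : 0 < g) {A : Set V}
    (hA : A.Finite) (hne : A.Nonempty) : 0 < (ebd G A).ncard := by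
  have hA0 : (0 : ℝ) < A.ncard := by exact_mod_cast (ncard_pos hA).2 hne
  exact_mod_cast (by positivity : 0 < g * (A.ncard : ℝ) ^ (1 - 1 / d)).trans_le (hiso A hA hne)

theorem ebd_finite (hiso : IsoperimetricIneq G d g) (hg : 0 < g) {A : Set V}
    (hA : A.Finite) (hne : A.Nonempty) : (ebd G A).Finite :=
  finite_of_ncard_pos (hiso.ncard_ebd_pos hg hA hne)

theorem neighborSet_finite (hiso : IsoperimetricIneq G d g) (hg : 0 < g) (b : V) :
    (G.neighborSet b).Finite := by
  rw [neighborSet_eq_image_snd_ebd_singleton]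
  exact (hiso.ebd_finite hg (finite_singleton b) (singleton_nonempty b)).image _

theorem pos_of_degLE (hiso : IsoperimetricIneq G d g) (hg : 0 < g) {D : ℕ}
    (hdeg : DegLE G D) (v : V) : 0 < D := by
  refine (hdeg v).trans_lt' ((ncard_pos (hiso.neighborSet_finite hg v)).2 ?_)
  rw [neighborSet_eq_image_snd_ebd_singleton]
  exact (nonempty_of_ncard_ne_zero (hiso.ncard_ebd_pos hg (finite_singleton v)
    (singleton_nonempty v)).ne').image _

theorem ncard_ball_add_le (hiso : IsoperimetricIneq G d g) (hg : 0 < g) {D : ℕ}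
    (hdeg : DegLE G D) (v : V) (n : ℕ) :
    ((ball G v n).ncard : ℝ) + g / D * (ball G v n).ncard ^ (1 - 1 / d) ≤
      (ball G v (n + 1)).ncard := by
  have hB := ball_finite (fun _ => hiso.ebd_finite hg) v n
  have hE := hiso.ebd_finite hg hB ⟨v, mem_ball_self v n⟩
  have hsucc : ((ball G v (n + 1)).ncard : ℝ) =
      (ball G v n).ncard + (Prod.snd '' ebd G (ball G v n)).ncard := by
    rw [ball_succ, ncard_union_eq (disjoint_image_snd_ebd _) hB (hE.image _)]
    push_cast; rfl
  have hcount :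
      ((ebd G (ball G v n)).ncard : ℝ) ≤ D * (Prod.snd '' ebd G (ball G v n)).ncard := by
    exact_mod_cast ncard_ebd_le_mul hdeg (hiso.neighborSet_finite hg) hE
  rw [hsucc, div_mul_eq_mul_div]
  gcongr
  exact div_le_of_le_mul₀ (Nat.cast_nonneg _) (Nat.cast_nonneg _)
    ((hiso _ hB ⟨v, mem_ball_self v n⟩).trans (hcount.trans_eq (mul_comm _ _)))

end IsoperimetricIneq

end SepProfile

open SepProfile Real

theorem stmt5_general {V : Type*} (G : SimpleGraph V)
    (D : ℕ) (hdeg : DegLE G D) (v : V) (d₁ g : ℝ) (hd₁ : 1 < d₁) (hg : 0 < g)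
    (nω : ℕ)
    (hiso : ∀ A : Set V, A.Finite → A.Nonempty →
      g * ((A.ncard : ℝ)) ^ (1 - 1/d₁) ≤ ((ebd G A).ncard : ℝ)) :
    ∃ b' > (0:ℝ), ∀ n : ℕ, nω ≤ n →
      b' * g ^ d₁ * ((n : ℝ) - (nω : ℝ)) ^ d₁ ≤ ((ball G v n).ncard : ℝ) := by
  have hiso : IsoperimetricIneq G d₁ g := hiso
  have hD : (0 : ℝ) < D := by exact_mod_cast hiso.pos_of_degLE hg hdeg v
  set ε := (1 + g / D) ^ (1 / d₁) - 1
  have hε : 0 < ε := sub_pos.2 (one_lt_rpow (by simp; positivity) (by positivity))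
  have h0 : (1 : ℝ) ≤ (ball G v nω).ncard := by
    exact_mod_cast (ncard_pos (ball_finite (fun _ => hiso.ebd_finite hg) v nω)).2
      ⟨v, mem_ball_self v nω⟩
  refine ⟨(ε / g) ^ d₁, by positivity, fun n hn => ?_⟩
  have hgrowth := one_add_mul_rpow_le_of_growth (a := fun k => ((ball G v (nω + k)).ncard : ℝ))
    hd₁.le (by positivity) h0 (fun k => hiso.ncard_ball_add_le hg hdeg v (nω + k)) (n - nω)
  calc (ε / g) ^ d₁ * g ^ d₁ * ((n : ℝ) - nω) ^ d₁ = (ε * (n - nω : ℕ)) ^ d₁ := by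
        rw [← mul_rpow (by positivity) hg.le, div_mul_cancel₀ _ hg.ne', Nat.cast_sub hn,
          ← mul_rpow hε.le (by simpa using hn)]
    _ ≤ (1 + ε * (n - nω : ℕ)) ^ d₁ := by gcongr; linarith
    _ ≤ (ball G v n).ncard := by simpa only [Nat.add_sub_cancel' hn] using hgrowth

theorem stmt5 {V : Type*} [Infinite V] (G : SimpleGraph V) (hconn : G.Connected)
    (D : ℕ) (hdeg : DegLE G D) (v : V) (d₁ g : ℝ) (hd₁ : 1 < d₁) (hg : 0 < g)
    (nω : ℕ)
    (hiso : ∀ A : Set V, A.Finite → A.Nonempty →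
      g * ((A.ncard : ℝ)) ^ (1 - 1/d₁) ≤ ((ebd G A).ncard : ℝ)) :
    ∃ b' > (0:ℝ), ∀ n : ℕ, nω ≤ n →
      b' * g ^ d₁ * ((n : ℝ) - (nω : ℝ)) ^ d₁ ≤ ((ball G v n).ncard : ℝ) :=
  stmt5_general G D hdeg v d₁ g hd₁ hg nω hiso
end
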